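/- (Inequality (3.34) from the proof of Lemma 3.9.) Let ℓ ≥ 2, n ≥ 1, 𝔾 = (ℤ/ℓℤ)^n, and let ν be a symmetric probability measure on 𝔾 with d_TV(ν,π) ≤ 1/4. Then ℰ^IP_π(f) ≤ 4 · ℰ^IP_{ν⋆ν}(f) for every f : 𝔖(𝔾) → ℝ. -/

import Mathlib

open Finset

/-- The group `(ℤ/ℓℤ)^n`. -/
abbrev GG (ℓ n : ℕ) : Type := Fin n → ZMod ℓ

/-- The Dirichlet form of the interchange process on `𝔾 = (ℤ/ℓℤ)^n` with increment
law `μ`. -/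
noncomputable def ipFormG (ℓ n : ℕ) [NeZero ℓ] (μ : GG ℓ n → ℝ)
    (f : Equiv.Perm (GG ℓ n) → ℝ) : ℝ :=
  (1 / (2 * (Nat.factorial (Fintype.card (GG ℓ n)) : ℝ))) *
    ∑ σ : Equiv.Perm (GG ℓ n), ∑ x : GG ℓ n, ∑ z : GG ℓ n,
      μ z * (f (σ * Equiv.swap x (x + z)) - f σ) ^ 2

/-- Convolution of two measures on `(ℤ/ℓℤ)^n`. -/
noncomputable def conv {ℓ n : ℕ} [NeZero ℓ] (μ ν : GG ℓ n → ℝ) : GG ℓ n → ℝ :=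
  fun x => ∑ z : GG ℓ n, μ z * ν (x - z)

/-- `m`-fold self-convolution: `convIter μ 0` is the Dirac mass at `0` and
`convIter μ (m+1) = μ ⋆ convIter μ m`; in particular `convIter μ 1 = μ`. -/
noncomputable def convIter {ℓ n : ℕ} [NeZero ℓ] (μ : GG ℓ n → ℝ) : ℕ → (GG ℓ n → ℝ)
  | 0 => fun x => if x = 0 then 1 else 0
  | (m + 1) => conv μ (convIter μ m)

/-- The number of nonzero coordinates of `x`. -/
def suppCard {ℓ n : ℕ} (x : GG ℓ n) : ℕ :=
  (Finset.univ.filter fun i => x i ≠ 0).card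

/-- `ρ_k`, the uniform probability measure on the set of elements of `(ℤ/ℓℤ)^n`
with exactly `k` nonzero coordinates. -/
noncomputable def rho (ℓ n : ℕ) [NeZero ℓ] (k : ℕ) : GG ℓ n → ℝ :=
  fun x => if suppCard x = k
    then 1 / ((Finset.univ.filter fun y : GG ℓ n => suppCard y = k).card : ℝ)
    else 0

/-- `π`, the uniform probability measure on `(ℤ/ℓℤ)^n`. -/
noncomputable def unifG (ℓ n : ℕ) [NeZero ℓ] : GG ℓ n → ℝ :=
  fun _ => 1 / (Fintype.card (GG ℓ n) : ℝ)

/-- Total-variation distance between `ν` and the uniform measure `π` on `(ℤ/ℓℤ)^n`. -/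
noncomputable def dTV {ℓ n : ℕ} [NeZero ℓ] (ν : GG ℓ n → ℝ) : ℝ :=
  (1 / 2) * ∑ x : GG ℓ n, |ν x - 1 / (Fintype.card (GG ℓ n) : ℝ)|

/- ### Auxiliary lemmas -/

lemma sos6 (x1 xh xk xm xp xq : ℝ) :
    0 ≤ (2*(xh-x1)^2 + 2*(xk-x1)^2 - (xm-x1)^2)
      + (2*(x1-xh)^2 + 2*(xp-xh)^2 - (xq-xh)^2)
      + (2*(xq-xk)^2 + 2*(x1-xk)^2 - (xp-xk)^2)
      + (2*(xp-xm)^2 + 2*(xq-xm)^2 - (x1-xm)^2)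
      + (2*(xm-xp)^2 + 2*(xh-xp)^2 - (xk-xp)^2)
      + (2*(xk-xq)^2 + 2*(xm-xq)^2 - (xh-xq)^2) := by
  nlinarith [sq_nonneg (3*x1-2*xh-2*xk+xm), sq_nonneg (5*xh-4*xk+2*xm-6*xp+3*xq),
    sq_nonneg (xk+2*xm-xp-2*xq)]

section SwapTriangle

variable {α : Type*} [DecidableEq α] [Fintype α]

/-- The key "triangle" inequality with constant 2 for interchange Dirichlet forms of
single transpositions. -/
lemma swap_triangle (f : Equiv.Perm α → ℝ) (a b c : α) :
    ∑ σ : Equiv.Perm α, (f (σ * Equiv.swap a c) - f σ)^2 ≤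
      2 * ∑ σ : Equiv.Perm α, (f (σ * Equiv.swap a b) - f σ)^2
      + 2 * ∑ σ : Equiv.Perm α, (f (σ * Equiv.swap b c) - f σ)^2 := by
  by_cases hac : a = c
  · subst hac
    have h1 : ∀ σ : Equiv.Perm α, (f (σ * Equiv.swap a a) - f σ)^2 = 0 := by
      intro σ; simp [Equiv.swap_self, ← Equiv.Perm.one_def]
    rw [Finset.sum_congr rfl (fun σ _ => h1 σ), Finset.sum_const_zero]
    positivity
  by_cases hab : a = b
  · subst hab
    have h1 : ∀ σ : Equiv.Perm α, (f (σ * Equiv.swap a a) - f σ)^2 = 0 := by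
      intro σ; simp [Equiv.swap_self, ← Equiv.Perm.one_def]
    rw [Finset.sum_congr rfl (fun σ _ => h1 σ), Finset.sum_const_zero]
    have hnn : (0:ℝ) ≤ ∑ σ : Equiv.Perm α, (f (σ * Equiv.swap a c) - f σ)^2 :=
      Finset.sum_nonneg fun σ _ => sq_nonneg _
    linarith
  by_cases hbc : b = c
  · subst hbc
    have h1 : ∀ σ : Equiv.Perm α, (f (σ * Equiv.swap b b) - f σ)^2 = 0 := by
      intro σ; simp [Equiv.swap_self, ← Equiv.Perm.one_def]
    rw [Finset.sum_congr rfl (fun σ _ => h1 σ), Finset.sum_const_zero]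
    have hnn : (0:ℝ) ≤ ∑ σ : Equiv.Perm α, (f (σ * Equiv.swap a b) - f σ)^2 :=
      Finset.sum_nonneg fun σ _ => sq_nonneg _
    linarith
  -- main case: a, b, c pairwise distinct
  set h := Equiv.swap a b with hh
  set k := Equiv.swap b c with hk
  set m := Equiv.swap a c with hm
  have i1 : h * m = k * h := by
    ext x; simp only [hh, hk, hm, Equiv.Perm.mul_apply, Equiv.swap_apply_def]
    split_ifs <;> simp_all
  have i2 : k * m = h * k := by
    ext x; simp only [hh, hk, hm, Equiv.Perm.mul_apply, Equiv.swap_apply_def]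
    split_ifs <;> simp_all
  have i3 : m * h = h * k := by
    ext x; simp only [hh, hk, hm, Equiv.Perm.mul_apply, Equiv.swap_apply_def]
    split_ifs <;> simp_all
  have i4 : m * k = k * h := by
    ext x; simp only [hh, hk, hm, Equiv.Perm.mul_apply, Equiv.swap_apply_def]
    split_ifs <;> simp_all
  have ihh : h * h = 1 := Equiv.swap_mul_self a b
  have ikk : k * k = 1 := Equiv.swap_mul_self b c
  have imm : m * m = 1 := Equiv.swap_mul_self a c
  have i5 : h * k * h = m := by rw [← i3, mul_assoc, ihh, mul_one]
  have i6 : h * k * m = k := by rw [mul_assoc, i2, ← mul_assoc, ihh, one_mul]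
  have i7 : k * h * k = m := by rw [← i4, mul_assoc, ikk, mul_one]
  have i8 : k * h * m = h := by rw [mul_assoc, i1, ← mul_assoc, ikk, one_mul]
  set t : Equiv.Perm α → ℝ := fun σ =>
    2*(f (σ*h) - f σ)^2 + 2*(f (σ*k) - f σ)^2 - (f (σ*m) - f σ)^2 with ht
  have hshift : ∀ g : Equiv.Perm α, ∑ σ : Equiv.Perm α, t (σ * g) = ∑ σ : Equiv.Perm α, t σ :=
    fun g => Equiv.sum_comp (Equiv.mulRight g) t
  have hTsum : ∑ σ : Equiv.Perm α,
      (t σ + t (σ*h) + t (σ*k) + t (σ*m) + t (σ*(h*k)) + t (σ*(k*h)))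
      = 6 * ∑ σ : Equiv.Perm α, t σ := by
    rw [Finset.sum_add_distrib, Finset.sum_add_distrib, Finset.sum_add_distrib,
      Finset.sum_add_distrib, Finset.sum_add_distrib,
      hshift h, hshift k, hshift m, hshift (h*k), hshift (k*h)]
    ring
  have hpt : ∀ σ : Equiv.Perm α,
      0 ≤ t σ + t (σ*h) + t (σ*k) + t (σ*m) + t (σ*(h*k)) + t (σ*(k*h)) := by
    intro σ
    have e1 : σ*h*h = σ := by rw [mul_assoc, ihh, mul_one]
    have e2 : σ*h*k = σ*(h*k) := by rw [mul_assoc]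
    have e3 : σ*h*m = σ*(k*h) := by rw [mul_assoc, i1]
    have e4 : σ*k*h = σ*(k*h) := by rw [mul_assoc]
    have e5 : σ*k*k = σ := by rw [mul_assoc, ikk, mul_one]
    have e6 : σ*k*m = σ*(h*k) := by rw [mul_assoc, i2]
    have e7 : σ*m*h = σ*(h*k) := by rw [mul_assoc, i3]
    have e8 : σ*m*k = σ*(k*h) := by rw [mul_assoc, i4]
    have e9 : σ*m*m = σ := by rw [mul_assoc, imm, mul_one]
    have e10 : σ*(h*k)*h = σ*m := by rw [mul_assoc, i5]
    have e11 : σ*(h*k)*k = σ*h := by rw [mul_assoc, mul_assoc h k k, ikk, mul_one]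
    have e12 : σ*(h*k)*m = σ*k := by rw [mul_assoc, i6]
    have e13 : σ*(k*h)*h = σ*k := by rw [mul_assoc, mul_assoc k h h, ihh, mul_one]
    have e14 : σ*(k*h)*k = σ*m := by rw [mul_assoc, i7]
    have e15 : σ*(k*h)*m = σ*h := by rw [mul_assoc, i8]
    simp only [ht, e1, e2, e3, e4, e5, e6, e7, e8, e9, e10, e11, e12, e13, e14, e15]
    have := sos6 (f σ) (f (σ*h)) (f (σ*k)) (f (σ*m)) (f (σ*(h*k))) (f (σ*(k*h)))
    linarith
  have hT : 0 ≤ ∑ σ : Equiv.Perm α, t σ := by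
    have h6 : 0 ≤ 6 * ∑ σ : Equiv.Perm α, t σ := by
      rw [← hTsum]; exact Finset.sum_nonneg fun σ _ => hpt σ
    linarith
  have hTexp : ∑ σ : Equiv.Perm α, t σ =
      2 * ∑ σ : Equiv.Perm α, (f (σ*h) - f σ)^2
      + 2 * ∑ σ : Equiv.Perm α, (f (σ*k) - f σ)^2
      - ∑ σ : Equiv.Perm α, (f (σ*m) - f σ)^2 := by
    simp only [ht]
    rw [Finset.sum_sub_distrib, Finset.sum_add_distrib, Finset.mul_sum, Finset.mul_sum]
  rw [hTexp] at hT
  linarith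

end SwapTriangle

section Dsum

variable {ℓ n : ℕ} [NeZero ℓ]

/-- The (unnormalized) Dirichlet form of a single increment `z`. -/
noncomputable def Dsum (f : Equiv.Perm (GG ℓ n) → ℝ) (z : GG ℓ n) : ℝ :=
  ∑ σ : Equiv.Perm (GG ℓ n), ∑ x : GG ℓ n, (f (σ * Equiv.swap x (x + z)) - f σ) ^ 2

lemma Dsum_nonneg (f : Equiv.Perm (GG ℓ n) → ℝ) (z : GG ℓ n) : 0 ≤ Dsum f z :=
  Finset.sum_nonneg fun _ _ => Finset.sum_nonneg fun _ _ => sq_nonneg _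

lemma Dsum_key (f : Equiv.Perm (GG ℓ n) → ℝ) (z w : GG ℓ n) :
    Dsum f (z + w) ≤ 2 * Dsum f z + 2 * Dsum f w := by
  have hswap : ∀ u : GG ℓ n, Dsum f u =
      ∑ x : GG ℓ n, ∑ σ : Equiv.Perm (GG ℓ n), (f (σ * Equiv.swap x (x + u)) - f σ) ^ 2 :=
    fun u => Finset.sum_comm
  rw [hswap (z + w), hswap z]
  have hle : ∀ x : GG ℓ n,
      ∑ σ : Equiv.Perm (GG ℓ n), (f (σ * Equiv.swap x (x + (z + w))) - f σ) ^ 2 ≤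
        2 * ∑ σ : Equiv.Perm (GG ℓ n), (f (σ * Equiv.swap x (x + z)) - f σ) ^ 2
        + 2 * ∑ σ : Equiv.Perm (GG ℓ n), (f (σ * Equiv.swap (x + z) (x + (z + w))) - f σ) ^ 2 :=
    fun x => swap_triangle f x (x + z) (x + (z + w))
  have hsum2 : ∑ x : GG ℓ n, ∑ σ : Equiv.Perm (GG ℓ n),
      (f (σ * Equiv.swap (x + z) (x + (z + w))) - f σ) ^ 2 = Dsum f w := by
    rw [hswap w]
    have : ∀ x : GG ℓ n, x + (z + w) = (x + z) + w := fun x => (add_assoc x z w).symm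
    calc ∑ x : GG ℓ n, ∑ σ : Equiv.Perm (GG ℓ n),
          (f (σ * Equiv.swap (x + z) (x + (z + w))) - f σ) ^ 2
        = ∑ x : GG ℓ n, ∑ σ : Equiv.Perm (GG ℓ n),
          (f (σ * Equiv.swap (x + z) ((x + z) + w)) - f σ) ^ 2 := by
          refine Finset.sum_congr rfl fun x _ => ?_
          rw [this x]
      _ = ∑ y : GG ℓ n, ∑ σ : Equiv.Perm (GG ℓ n),
          (f (σ * Equiv.swap y (y + w)) - f σ) ^ 2 :=
          Equiv.sum_comp (Equiv.addRight z)
            (fun y => ∑ σ : Equiv.Perm (GG ℓ n), (f (σ * Equiv.swap y (y + w)) - f σ) ^ 2)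
  calc ∑ x : GG ℓ n, ∑ σ : Equiv.Perm (GG ℓ n), (f (σ * Equiv.swap x (x + (z + w))) - f σ) ^ 2
      ≤ ∑ x : GG ℓ n,
          (2 * ∑ σ : Equiv.Perm (GG ℓ n), (f (σ * Equiv.swap x (x + z)) - f σ) ^ 2
          + 2 * ∑ σ : Equiv.Perm (GG ℓ n), (f (σ * Equiv.swap (x + z) (x + (z + w))) - f σ) ^ 2) :=
        Finset.sum_le_sum fun x _ => hle x
    _ = 2 * ∑ x : GG ℓ n, ∑ σ : Equiv.Perm (GG ℓ n), (f (σ * Equiv.swap x (x + z)) - f σ) ^ 2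
        + 2 * ∑ x : GG ℓ n, ∑ σ : Equiv.Perm (GG ℓ n),
            (f (σ * Equiv.swap (x + z) (x + (z + w))) - f σ) ^ 2 := by
        rw [Finset.sum_add_distrib, ← Finset.mul_sum, ← Finset.mul_sum]
    _ = 2 * ∑ x : GG ℓ n, ∑ σ : Equiv.Perm (GG ℓ n), (f (σ * Equiv.swap x (x + z)) - f σ) ^ 2
        + 2 * Dsum f w := by rw [hsum2]

lemma Dsum_max (f : Equiv.Perm (GG ℓ n) → ℝ) (u : GG ℓ n) :
    (Fintype.card (GG ℓ n) : ℝ) * Dsum f u ≤ 4 * ∑ z : GG ℓ n, Dsum f z := by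
  have h1 : ∀ z : GG ℓ n, Dsum f u ≤ 2 * Dsum f z + 2 * Dsum f (u - z) := by
    intro z
    have h2 := Dsum_key f z (u - z)
    have h3 : z + (u - z) = u := by ring
    rwa [h3] at h2
  have h4 : (Fintype.card (GG ℓ n) : ℝ) * Dsum f u = ∑ _z : GG ℓ n, Dsum f u := by
    rw [Finset.sum_const, Finset.card_univ, nsmul_eq_mul]
  rw [h4]
  have h5 : ∑ z : GG ℓ n, Dsum f (u - z) = ∑ z : GG ℓ n, Dsum f z :=
    Equiv.sum_comp (Equiv.subLeft u) (Dsum f)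
  calc ∑ _z : GG ℓ n, Dsum f u ≤ ∑ z : GG ℓ n, (2 * Dsum f z + 2 * Dsum f (u - z)) :=
        Finset.sum_le_sum fun z _ => h1 z
    _ = 2 * ∑ z : GG ℓ n, Dsum f z + 2 * ∑ z : GG ℓ n, Dsum f (u - z) := by
        rw [Finset.sum_add_distrib, ← Finset.mul_sum, ← Finset.mul_sum]
    _ = 4 * ∑ z : GG ℓ n, Dsum f z := by rw [h5]; ring

lemma ipFormG_eq (μ : GG ℓ n → ℝ) (f : Equiv.Perm (GG ℓ n) → ℝ) :
    ipFormG ℓ n μ f = (1 / (2 * (Nat.factorial (Fintype.card (GG ℓ n)) : ℝ))) *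
      ∑ z : GG ℓ n, μ z * Dsum f z := by
  rw [ipFormG]
  congr 1
  calc ∑ σ : Equiv.Perm (GG ℓ n), ∑ x : GG ℓ n, ∑ z : GG ℓ n,
        μ z * (f (σ * Equiv.swap x (x + z)) - f σ) ^ 2
      = ∑ σ : Equiv.Perm (GG ℓ n), ∑ z : GG ℓ n, ∑ x : GG ℓ n,
        μ z * (f (σ * Equiv.swap x (x + z)) - f σ) ^ 2 :=
        Finset.sum_congr rfl fun σ _ => Finset.sum_comm
    _ = ∑ z : GG ℓ n, ∑ σ : Equiv.Perm (GG ℓ n), ∑ x : GG ℓ n,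
        μ z * (f (σ * Equiv.swap x (x + z)) - f σ) ^ 2 := Finset.sum_comm
    _ = ∑ z : GG ℓ n, μ z * Dsum f z := by
        refine Finset.sum_congr rfl fun z _ => ?_
        rw [Dsum, Finset.mul_sum]
        exact Finset.sum_congr rfl fun σ _ => (Finset.mul_sum _ _ _).symm

end Dsum

theorem stmt16 (ℓ n : ℕ) [NeZero ℓ] (hℓ : 2 ≤ ℓ) (hn : 1 ≤ n)
    (ν : GG ℓ n → ℝ) (hnonneg : ∀ z, 0 ≤ ν z) (hsum : ∑ z : GG ℓ n, ν z = 1)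
    (hsymm : ∀ z, ν (-z) = ν z) (htv : dTV ν ≤ 1 / 4) :
    ∀ f : Equiv.Perm (GG ℓ n) → ℝ,
      ipFormG ℓ n (unifG ℓ n) f ≤ 4 * ipFormG ℓ n (conv ν ν) f := by
  intro f
  have hNpos : (0:ℝ) < (Fintype.card (GG ℓ n) : ℝ) := by
    have : 0 < Fintype.card (GG ℓ n) := Fintype.card_pos
    exact_mod_cast this
  set N : ℝ := (Fintype.card (GG ℓ n) : ℝ) with hN
  have hNne : N ≠ 0 := ne_of_gt hNpos
  set S : ℝ := ∑ z : GG ℓ n, Dsum f z with hS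
  have hSnn : 0 ≤ S := Finset.sum_nonneg fun z _ => Dsum_nonneg f z
  have hDle : ∀ u : GG ℓ n, Dsum f u ≤ 4 * S / N := by
    intro u
    rw [le_div_iff₀ hNpos]
    have := Dsum_max f u
    rw [← hS, ← hN] at this
    linarith
  -- the centered measure e and its positive and negative parts
  set e : GG ℓ n → ℝ := fun w => ν w - 1 / N with he
  set a : GG ℓ n → ℝ := fun w => max (e w) 0 with ha
  set b : GG ℓ n → ℝ := fun w => max (-e w) 0 with hb
  have hanonneg : ∀ w, 0 ≤ a w := fun w => le_max_right _ _
  have hbnonneg : ∀ w, 0 ≤ b w := fun w => le_max_right _ _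
  have habsub : ∀ w, a w - b w = e w := fun w => max_zero_sub_max_neg_zero_eq_self (e w)
  have habadd : ∀ w, a w + b w = |e w| := fun w => max_zero_add_max_neg_zero_eq_abs_self (e w)
  have hnue : ∀ w, ν w = 1 / N + e w := by
    intro w; simp only [he]; ring
  have hesum : ∑ w : GG ℓ n, e w = 0 := by
    simp only [he]
    rw [Finset.sum_sub_distrib, hsum, Finset.sum_const, Finset.card_univ, nsmul_eq_mul, ← hN]
    field_simp
    norm_num
  have heabs : ∑ w : GG ℓ n, |e w| ≤ 1/2 := by
    have h := htv
    rw [dTV] at h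
    have h2 : ∑ w : GG ℓ n, |e w|
        = ∑ x : GG ℓ n, |ν x - 1 / (Fintype.card (GG ℓ n) : ℝ)| := rfl
    rw [h2]
    linarith
  clear_value N S e a b
  have hSa : (∑ w : GG ℓ n, a w ≤ 1/4) ∧ (∑ w : GG ℓ n, b w ≤ 1/4) := by
    have h1 : ∑ w : GG ℓ n, a w - ∑ w : GG ℓ n, b w = 0 := by
      rw [← Finset.sum_sub_distrib]
      rw [Finset.sum_congr rfl fun w _ => habsub w, hesum]
    have h2 : ∑ w : GG ℓ n, a w + ∑ w : GG ℓ n, b w ≤ 1/2 := by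
      rw [← Finset.sum_add_distrib]
      rw [Finset.sum_congr rfl fun w _ => habadd w]
      exact heabs
    constructor <;> linarith
  have hSanonneg : 0 ≤ ∑ w : GG ℓ n, a w := Finset.sum_nonneg fun w _ => hanonneg w
  have hSbnonneg : 0 ≤ ∑ w : GG ℓ n, b w := Finset.sum_nonneg fun w _ => hbnonneg w
  -- decomposition of the convolution
  have hesum' : ∀ u : GG ℓ n, ∑ w : GG ℓ n, e (u - w) = 0 := by
    intro u
    rw [show (∑ w : GG ℓ n, e (u - w)) = ∑ w : GG ℓ n, e ((Equiv.subLeft u) w) from rfl,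
      Equiv.sum_comp (Equiv.subLeft u) e]
    exact hesum
  have hconv : ∀ u : GG ℓ n, conv ν ν u = 1 / N + ∑ w : GG ℓ n, e w * e (u - w) := by
    intro u
    rw [conv]
    have hterm : ∀ w : GG ℓ n, ν w * ν (u - w)
        = 1/N * (1/N) + 1/N * e (u - w) + e w * (1/N) + e w * e (u - w) := by
      intro w
      rw [hnue w, hnue (u - w)]; ring
    rw [Finset.sum_congr rfl fun w _ => hterm w]
    have hNN : N * (1/N * (1/N)) = 1/N := by field_simp
    rw [Finset.sum_add_distrib, Finset.sum_add_distrib, Finset.sum_add_distrib,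
      Finset.sum_const, Finset.card_univ, nsmul_eq_mul, ← hN, hNN,
      ← Finset.mul_sum, hesum' u, ← Finset.sum_mul, hesum]
    ring
  -- rewrite the two Dirichlet forms
  rw [ipFormG_eq, ipFormG_eq]
  have hunif : ∑ z : GG ℓ n, unifG ℓ n z * Dsum f z = 1/N * S := by
    rw [hS, Finset.mul_sum]
    refine Finset.sum_congr rfl fun z _ => ?_
    simp only [unifG]
    rw [← hN]
  set T : ℝ := ∑ z : GG ℓ n, (∑ w : GG ℓ n, e w * e (z - w)) * Dsum f z with hT
  have hconvsum : ∑ z : GG ℓ n, conv ν ν z * Dsum f z = 1/N * S + T := by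
    rw [Finset.sum_congr rfl fun z _ => by rw [hconv z, add_mul]]
    rw [Finset.sum_add_distrib, hT, hS, Finset.mul_sum]
  -- lower bound for T
  have hTexp : T = ∑ z : GG ℓ n, ∑ w : GG ℓ n, e w * e (z - w) * Dsum f z := by
    rw [hT]
    exact Finset.sum_congr rfl fun z _ => Finset.sum_mul _ _ _
  clear_value T
  have hptw : ∀ z w : GG ℓ n,
      -((a w * b (z - w) + b w * a (z - w)) * Dsum f z) ≤ e w * e (z - w) * Dsum f z := by
    intro z w
    have hD := Dsum_nonneg f z
    have hkey : -(a w * b (z - w) + b w * a (z - w)) ≤ e w * e (z - w) := by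
      have h1 : e w * e (z - w) + (a w * b (z - w) + b w * a (z - w))
          = a w * a (z - w) + b w * b (z - w) := by
        rw [← habsub w, ← habsub (z - w)]; ring
      have h2 : 0 ≤ a w * a (z - w) + b w * b (z - w) :=
        add_nonneg (mul_nonneg (hanonneg w) (hanonneg _)) (mul_nonneg (hbnonneg w) (hbnonneg _))
      linarith
    calc -((a w * b (z - w) + b w * a (z - w)) * Dsum f z)
        = (-(a w * b (z - w) + b w * a (z - w))) * Dsum f z := by ring
      _ ≤ e w * e (z - w) * Dsum f z := mul_le_mul_of_nonneg_right hkey hD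
  have hcoefD : ∀ z w : GG ℓ n,
      (a w * b (z - w) + b w * a (z - w)) * Dsum f z
        ≤ (a w * b (z - w) + b w * a (z - w)) * (4 * S / N) := by
    intro z w
    exact mul_le_mul_of_nonneg_left (hDle z)
      (add_nonneg (mul_nonneg (hanonneg w) (hbnonneg _)) (mul_nonneg (hbnonneg w) (hanonneg _)))
  have hcoefsum : ∑ z : GG ℓ n, ∑ w : GG ℓ n, (a w * b (z - w) + b w * a (z - w))
      = (∑ w : GG ℓ n, a w) * (∑ w : GG ℓ n, b w) + (∑ w : GG ℓ n, b w) * (∑ w : GG ℓ n, a w) := by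
    rw [Finset.sum_comm]
    have hw : ∀ w : GG ℓ n, ∑ z : GG ℓ n, (a w * b (z - w) + b w * a (z - w))
        = a w * (∑ u : GG ℓ n, b u) + b w * (∑ u : GG ℓ n, a u) := by
      intro w
      rw [Finset.sum_add_distrib, ← Finset.mul_sum, ← Finset.mul_sum]
      have hb' : ∑ z : GG ℓ n, b (z - w) = ∑ u : GG ℓ n, b u := by
        rw [show (∑ z : GG ℓ n, b (z - w)) = ∑ z : GG ℓ n, b ((Equiv.subRight w) z) from rfl,
          Equiv.sum_comp (Equiv.subRight w) b]
      have ha' : ∑ z : GG ℓ n, a (z - w) = ∑ u : GG ℓ n, a u := by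
        rw [show (∑ z : GG ℓ n, a (z - w)) = ∑ z : GG ℓ n, a ((Equiv.subRight w) z) from rfl,
          Equiv.sum_comp (Equiv.subRight w) a]
      rw [hb', ha']
    rw [Finset.sum_congr rfl fun w _ => hw w]
    rw [Finset.sum_add_distrib, ← Finset.sum_mul, ← Finset.sum_mul]
  have hTlb : -(1/2 * (1/N * S)) ≤ T := by
    have step1 : ∑ z : GG ℓ n, ∑ w : GG ℓ n,
        (-((a w * b (z - w) + b w * a (z - w)) * Dsum f z)) ≤ T := by
      rw [hTexp]
      exact Finset.sum_le_sum fun z _ => Finset.sum_le_sum fun w _ => hptw z w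
    have step2 : ∑ z : GG ℓ n, ∑ w : GG ℓ n,
        ((a w * b (z - w) + b w * a (z - w)) * Dsum f z)
        ≤ ∑ z : GG ℓ n, ∑ w : GG ℓ n,
        ((a w * b (z - w) + b w * a (z - w)) * (4 * S / N)) :=
      Finset.sum_le_sum fun z _ => Finset.sum_le_sum fun w _ => hcoefD z w
    have step3 : ∑ z : GG ℓ n, ∑ w : GG ℓ n,
        ((a w * b (z - w) + b w * a (z - w)) * (4 * S / N))
        = ((∑ w : GG ℓ n, a w) * (∑ w : GG ℓ n, b w)
          + (∑ w : GG ℓ n, b w) * (∑ w : GG ℓ n, a w)) * (4 * S / N) := by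
      rw [← hcoefsum, Finset.sum_mul]
      exact Finset.sum_congr rfl fun z _ => (Finset.sum_mul _ _ _).symm
    have step4 : ((∑ w : GG ℓ n, a w) * (∑ w : GG ℓ n, b w)
          + (∑ w : GG ℓ n, b w) * (∑ w : GG ℓ n, a w)) * (4 * S / N)
        ≤ (1/8) * (4 * S / N) := by
      have hprod : (∑ w : GG ℓ n, a w) * (∑ w : GG ℓ n, b w) ≤ 1/16 := by
        have := mul_le_mul hSa.1 hSa.2 hSbnonneg (by norm_num : (0:ℝ) ≤ 1/4)
        linarith
      have hdiv : 0 ≤ 4 * S / N := div_nonneg (by linarith) (le_of_lt hNpos)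
      nlinarith
    have step5 : ∑ z : GG ℓ n, ∑ w : GG ℓ n,
        (-((a w * b (z - w) + b w * a (z - w)) * Dsum f z))
        = -∑ z : GG ℓ n, ∑ w : GG ℓ n,
        ((a w * b (z - w) + b w * a (z - w)) * Dsum f z) := by
      rw [← Finset.sum_neg_distrib]
      exact Finset.sum_congr rfl fun z _ => by rw [← Finset.sum_neg_distrib]
    have heq : (1/8 : ℝ) * (4 * S / N) = 1/2 * (1/N * S) := by
      ring
    rw [step5] at step1
    rw [step3] at step2
    linarith
  -- put everything together
  rw [hunif, hconvsum]
  have hc : (0:ℝ) ≤ 1 / (2 * (Nat.factorial (Fintype.card (GG ℓ n)) : ℝ)) := by positivity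
  have hQ : 0 ≤ 1/N * S := mul_nonneg (by positivity) hSnn
  have hkey : 1/N * S ≤ 4 * (1/N * S + T) := by linarith
  calc (1 / (2 * (Nat.factorial (Fintype.card (GG ℓ n)) : ℝ))) * (1/N * S)
      ≤ (1 / (2 * (Nat.factorial (Fintype.card (GG ℓ n)) : ℝ))) * (4 * (1/N * S + T)) :=
        mul_le_mul_of_nonneg_left hkey hc
    _ = 4 * ((1 / (2 * (Nat.factorial (Fintype.card (GG ℓ n)) : ℝ))) * (1/N * S + T)) := by ring
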